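/- arXiv:2603.21946 — 2 statements merged into one kernel-verified Lean document; each statement's English description precedes it below -/
import Mathlib

section
/- Let H be a complex Hilbert space, X a set, and (p_x)_{x∈X} a family of pairwise orthogonal orthogonal projections in B(H) (p_x p_y = 0 for x ≠ y) with ∑_{x∈X} p_x ξ = ξ (as an unconditional sum) for every ξ ∈ H. Suppose given pairwise disjoint finite subsets X_r ⊆ X for r ≥ 1 with |X_r| = r, unit vectors η_x in the range of p_x for each x ∈ ⋃_r X_r, points j_r ∈ X_r, and set ξ_r := r^{-1/2} ∑_{x∈X_r} η_x. Let V ∈ B(H) satisfy V η_{j_r} = ξ_r for all r ≥ 1. Then for every k ∈ ℕ and every T ∈ S_k, one has ‖T − V‖ ≥ 1. -/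
/-!
Apply `T - V` to the unit vector `η (j r)`. Since `T` is column-sparse, `T (η (j r))` has a
nonzero component in at most `k` of the `r` blocks `p y`, `y ∈ Xr r`; in every other block
`(T - V) (η (j r))` has component `-r^{-1/2} η y`, of squared norm `1 / r`. Bessel's inequality
for the orthogonal projections `p y` gives `‖T - V‖² ≥ (r - k) / r`, and `r` is arbitrary.
-/

/-- For `k : ℕ`, `blockSparse p k` is the set of operators `T ∈ B(H)` such that for every
`x ∈ X` the set `{y : X | p y * T * p x ≠ 0}` has at most `k` elements, and for every
`y ∈ X` the set `{x : X | p y * T * p x ≠ 0}` has at most `k` elements. -/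
def blockSparse {H : Type*} [NormedAddCommGroup H] [InnerProductSpace ℂ H]
    {X : Type*} (p : X → (H →L[ℂ] H)) (k : ℕ) : Set (H →L[ℂ] H) :=
  {T | (∀ x : X, Cardinal.mk {y : X | p y * T * p x ≠ 0} ≤ k) ∧
       (∀ y : X, Cardinal.mk {x : X | p y * T * p x ≠ 0} ≤ k)}

open scoped InnerProductSpace
open Finset RCLike

theorem IsStarProjection.sum {R ι : Type*} [NonUnitalNonAssocSemiring R] [StarRing R]
    {P : ι → R} (hP : ∀ i, IsStarProjection (P i)) (horth : Pairwise fun i j => P i * P j = 0)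
    (s : Finset ι) : IsStarProjection (∑ i ∈ s, P i) := by
  classical
  induction s using Finset.induction_on with
  | empty => simp [IsStarProjection.zero]
  | insert a s has ih =>
    rw [sum_insert has]
    refine (hP a).add ih ?_
    rw [mul_sum]
    exact sum_eq_zero fun i hi => horth (ne_of_mem_of_not_mem hi has).symm

section InnerProductSpace

variable {𝕜 E : Type*} [RCLike 𝕜] [NormedAddCommGroup E] [InnerProductSpace 𝕜 E]
  [CompleteSpace E]

theorem IsStarProjection.re_inner_apply_self {P : E →L[𝕜] E} (hP : IsStarProjection P)
    (ζ : E) : re ⟪ζ, P ζ⟫_𝕜 = ‖P ζ‖ ^ 2 := by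
  have hPP : P (P ζ) = P ζ := congr($(hP.isIdempotentElem.eq) ζ)
  have h := hP.isSelfAdjoint.isSymmetric ζ (P ζ)
  simp only [ContinuousLinearMap.coe_coe, hPP] at h
  rw [← h, inner_self_eq_norm_sq]

theorem sum_norm_sq_apply_le_norm_sq {ι : Type*} {P : ι → E →L[𝕜] E}
    (hP : ∀ i, IsStarProjection (P i)) (horth : Pairwise fun i j => P i * P j = 0)
    (s : Finset ι) (ζ : E) : ∑ i ∈ s, ‖P i ζ‖ ^ 2 ≤ ‖ζ‖ ^ 2 := by
  set Q := ∑ i ∈ s, P i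
  have hQ : IsStarProjection Q := IsStarProjection.sum hP horth s
  calc ∑ i ∈ s, ‖P i ζ‖ ^ 2 = re ⟪ζ, Q ζ⟫_𝕜 := by
        simp only [← (hP _).re_inner_apply_self, Q, _root_.sum_apply, inner_sum,
          map_sum]
    _ = ‖Q ζ‖ ^ 2 := hQ.re_inner_apply_self ζ
    _ ≤ ‖ζ‖ ^ 2 := by
      gcongr
      exact (Q.le_opNorm ζ).trans (mul_le_of_le_one_left (norm_nonneg ζ) hQ.norm_le)

end InnerProductSpace

theorem apply_sum_eq_of_mem_range {𝕜 E X : Type*} [NontriviallyNormedField 𝕜]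
    [NormedAddCommGroup E] [NormedSpace 𝕜 E]
    {p : X → E →L[𝕜] E} (horth : Pairwise fun x y => p x * p y = 0) {F : Finset X} {η : X → E}
    (hη : ∀ x ∈ F, p x (η x) = η x) {y : X} (hy : y ∈ F) : p y (∑ x ∈ F, η x) = η y := by
  rw [map_sum, sum_eq_single_of_mem y hy fun x hx hxy => ?_, hη y hy]
  rw [← hη x hx, ← mul_apply_eq_comp, horth hxy.symm, zero_apply]

section Spreading

variable {H X : Type*} [NormedAddCommGroup H] [InnerProductSpace ℂ H] [CompleteSpace H]
  {p : X → H →L[ℂ] H}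

theorem card_sub_le_card_mul_norm_sub_sq (hp : ∀ x, IsStarProjection (p x))
    (horth : Pairwise fun x y => p x * p y = 0) (F : Finset X) {η : X → H}
    (hη : ∀ x ∈ F, ‖η x‖ = 1 ∧ p x (η x) = η x) {j : X} {v : H} (hv : ‖v‖ = 1)
    (hjv : p j v = v) {T V : H →L[ℂ] H} (hV : V v = (√(#F : ℝ))⁻¹ • ∑ x ∈ F, η x) {k : ℕ}
    (hT : Cardinal.mk {y | p y * T * p j ≠ 0} ≤ k) :
    (#F - k : ℝ) ≤ #F * ‖T - V‖ ^ 2 := by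
  classical
  set G := F.filter fun y => p y * T * p j = 0
  have hG : (#F - k : ℝ) ≤ #G := by
    have hbad : #(F.filter fun y => ¬p y * T * p j = 0) ≤ k :=
      Cardinal.mk_le_iff_forall_finset_subset_card_le.mp hT _ fun y hy => (mem_filter.mp hy).2
    have hsplit : #G + #(F.filter fun y => ¬p y * T * p j = 0) = #F :=
      card_filter_add_card_filter_not _
    rw [sub_le_iff_le_add]
    exact_mod_cast (by omega : #F ≤ #G + k)
  have hblock : ∀ y ∈ G, (#F : ℝ) * ‖p y ((T - V) v)‖ ^ 2 = 1 := by
    intro y hy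
    obtain ⟨hyF, hyT⟩ := mem_filter.mp hy
    have hTv : p y (T v) = 0 := by
      rw [← hjv, ← mul_apply_eq_comp, ← mul_apply_eq_comp, hyT, zero_apply]
    have hF : (0 : ℝ) < #F := by exact_mod_cast card_pos.mpr ⟨y, hyF⟩
    rw [sub_apply, map_sub, hTv, hV, ContinuousLinearMap.map_smul_of_tower,
      apply_sum_eq_of_mem_range horth (fun x hx => (hη x hx).2) hyF, zero_sub, norm_neg,
      norm_smul, (hη y hyF).1, mul_one, norm_inv, Real.norm_of_nonneg (Real.sqrt_nonneg _),
      inv_pow, Real.sq_sqrt hF.le, mul_inv_cancel₀ hF.ne']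
  calc (#F - k : ℝ) ≤ #G := hG
    _ = #F * ∑ y ∈ G, ‖p y ((T - V) v)‖ ^ 2 := by
      rw [mul_sum, sum_congr rfl hblock, sum_const, nsmul_one]
    _ ≤ #F * ‖(T - V) v‖ ^ 2 := by
      gcongr; exact sum_norm_sq_apply_le_norm_sq hp horth G _
    _ ≤ #F * ‖T - V‖ ^ 2 := by
      gcongr; exact (T - V).unit_le_opNorm v hv.le

end Spreading

theorem one_le_of_forall_natCast_sub_le_mul {a : ℝ} (k : ℕ)
    (h : ∀ r : ℕ, 1 ≤ r → (r - k : ℝ) ≤ r * a) : 1 ≤ a := by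
  by_contra! ha
  have ha' : 0 < 1 - a := sub_pos.mpr ha
  obtain ⟨r, hr⟩ := exists_nat_gt ((k : ℝ) / (1 - a))
  have hr0 : 0 < r := by exact_mod_cast (div_nonneg k.cast_nonneg ha'.le).trans_lt hr
  have := h r hr0
  rw [div_lt_iff₀ ha'] at hr
  linarith

theorem dist_to_spreading_operator_general
    {H : Type*} [NormedAddCommGroup H] [InnerProductSpace ℂ H] [CompleteSpace H]
    {X : Type*} (p : X → (H →L[ℂ] H))
    (hsa : ∀ x, IsSelfAdjoint (p x))
    (hidem : ∀ x, IsIdempotentElem (p x))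
    (horth : ∀ x y, x ≠ y → p x * p y = 0)
    (Xr : ℕ → Finset X)
    (hcard : ∀ r, 1 ≤ r → (Xr r).card = r)
    (η : X → H)
    (hη : ∀ r, 1 ≤ r → ∀ x ∈ Xr r, ‖η x‖ = 1 ∧ p x (η x) = η x)
    (j : ℕ → X) (hj : ∀ r, 1 ≤ r → j r ∈ Xr r)
    (ξ : ℕ → H)
    (hξ : ∀ r, 1 ≤ r → ξ r = (Real.sqrt r)⁻¹ • ∑ x ∈ Xr r, η x)
    (V : H →L[ℂ] H)
    (hV : ∀ r, 1 ≤ r → V (η (j r)) = ξ r)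
    (k : ℕ) (T : H →L[ℂ] H) (hT : T ∈ blockSparse p k) :
    1 ≤ ‖T - V‖ := by
  have hp : ∀ x, IsStarProjection (p x) := fun x => ⟨hidem x, hsa x⟩
  have hsq : 1 ≤ ‖T - V‖ ^ 2 := by
    refine one_le_of_forall_natCast_sub_le_mul k fun r hr => ?_
    have hηj := hη r hr (j r) (hj r hr)
    have key := card_sub_le_card_mul_norm_sub_sq hp horth (Xr r) (hη r hr) hηj.1 hηj.2
      (by rw [hV r hr, hξ r hr, hcard r hr]) (hT.1 (j r))
    rwa [hcard r hr] at key
  simpa using (one_le_sq_iff_one_le_abs _).mp hsq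

/-- with pairwise disjoint finite sets `X_r` of cardinality `r`, unit vectors
`η_x` in the ranges of the projections, points `j_r ∈ X_r`, spreading vectors
`ξ_r = r^{-1/2} ∑_{x ∈ X_r} η_x`, and `V` an operator with `V η_{j_r} = ξ_r`, every
`T ∈ S_k` satisfies `‖T - V‖ ≥ 1`. -/
theorem dist_to_spreading_operator
    {H : Type*} [NormedAddCommGroup H] [InnerProductSpace ℂ H] [CompleteSpace H]
    {X : Type*} (p : X → (H →L[ℂ] H))
    (hsa : ∀ x, IsSelfAdjoint (p x))
    (hidem : ∀ x, IsIdempotentElem (p x))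
    (horth : ∀ x y, x ≠ y → p x * p y = 0)
    (hcomplete : ∀ ξ : H, HasSum (fun x => p x ξ) ξ)
    (Xr : ℕ → Finset X)
    (hdisj : ∀ r s, 1 ≤ r → 1 ≤ s → r ≠ s → Disjoint (Xr r) (Xr s))
    (hcard : ∀ r, 1 ≤ r → (Xr r).card = r)
    (η : X → H)
    (hη : ∀ r, 1 ≤ r → ∀ x ∈ Xr r, ‖η x‖ = 1 ∧ p x (η x) = η x)
    (j : ℕ → X) (hj : ∀ r, 1 ≤ r → j r ∈ Xr r)
    (ξ : ℕ → H)
    (hξ : ∀ r, 1 ≤ r → ξ r = (Real.sqrt r)⁻¹ • ∑ x ∈ Xr r, η x)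
    (V : H →L[ℂ] H)
    (hV : ∀ r, 1 ≤ r → V (η (j r)) = ξ r)
    (k : ℕ) (T : H →L[ℂ] H) (hT : T ∈ blockSparse p k) :
    1 ≤ ‖T - V‖ :=
  dist_to_spreading_operator_general p hsa hidem horth Xr hcard η hη j hj ξ hξ V hV k T hT
end

section
/- Let H be a complex Hilbert space, A ⊆ B(H) a commutative unital C*-subalgebra, E : B(H) → A a conditional expectation, ξ ∈ H a unit vector, and let q ∈ B(H) be the rank-one orthogonal projection onto the span of ξ. Suppose that for every ε > 0 there exist finitely many pairwise orthogonal projections e_1, …, e_n ∈ A with e_1 + ⋯ + e_n = 1 and ‖e_k ξ‖² < ε for every k. Then E(q) = 0. In particular, if E is faithful, no unit vector ξ ∈ H has this property. -/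
/-!
Write `p = E q ∈ A`. Because `A` is commutative, `p` commutes with every projection `eᵢ` of a
partition of unity in `A`, so `p = ∑ eᵢ p eᵢ = E (∑ eᵢ q eᵢ)`. Each `eᵢ q eᵢ` is the rank-one
operator `|eᵢ ξ⟩⟨eᵢ ξ|` living under `eᵢ`, hence `eᵢ q eᵢ ≤ ‖eᵢ ξ‖² eᵢ < ε eᵢ`, and summing gives
`0 ≤ p ≤ ε` for every `ε > 0`, i.e. `p = 0`. A faithful `E` would then force `q = 0`.
-/

open InnerProductSpace

theorem sum_mul_mul_eq_of_commute {R ι : Type*} [Semiring R] [Fintype ι]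
    {e : ι → R} {p : R} (horth : ∀ i j, i ≠ j → e i * e j = 0) (hsum : ∑ i, e i = 1)
    (hp : ∀ i, Commute p (e i)) : ∑ i, e i * p * e i = p := by
  calc ∑ i, e i * p * e i = ∑ i, ∑ j, e i * p * e j := by
        refine Finset.sum_congr rfl fun i _ =>
          (Fintype.sum_eq_single (f := fun j => e i * p * e j) i fun j hji => ?_).symm
        rw [mul_assoc, (hp j).eq, ← mul_assoc, horth i j hji.symm, zero_mul]
    _ = (∑ i, e i) * p * ∑ j, e j := by rw [Finset.sum_mul, Finset.sum_mul_sum]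
    _ = p := by rw [hsum, one_mul, mul_one]

lemma IsStarProjection.mul_mul_self_le_norm_smul {A : Type*} [NonUnitalCStarAlgebra A]
    [PartialOrder A] [StarOrderedRing A] {e x : A} (he : IsStarProjection e)
    (hx : IsSelfAdjoint x) : e * x * e ≤ ‖e * x * e‖ • e := by
  have key := CStarAlgebra.star_left_conjugate_le_norm_smul (a := e) (hx.conjugate' e)
  have hee : e * e = e := he.isIdempotentElem
  rwa [he.isSelfAdjoint.star_eq, hee, show e * (e * x * e) * e = e * x * e by
    simp only [← mul_assoc, hee]; rw [mul_assoc, hee]] at key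

lemma CStarAlgebra.eq_zero_of_forall_le_algebraMap {A : Type*} [CStarAlgebra A] [PartialOrder A]
    [StarOrderedRing A] {a : A} (ha : 0 ≤ a) (h : ∀ ε : ℝ, 0 < ε → a ≤ algebraMap ℝ A ε) :
    a = 0 := by
  rw [← norm_le_zero_iff]
  refine le_of_forall_pos_le_add fun ε hε => ?_
  rw [zero_add, CStarAlgebra.norm_le_iff_le_algebraMap a hε.le ha]
  exact h ε hε

lemma sum_mul_mul_le_algebraMap {A ι : Type*} [CStarAlgebra A] [PartialOrder A]
    [StarOrderedRing A] [Fintype ι] {e : ι → A} {x : A} {ε : ℝ}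
    (he : ∀ i, IsStarProjection (e i)) (hsum : ∑ i, e i = 1) (hx : IsSelfAdjoint x)
    (hε : ∀ i, ‖e i * x * e i‖ ≤ ε) : ∑ i, e i * x * e i ≤ algebraMap ℝ A ε :=
  calc ∑ i, e i * x * e i ≤ ∑ i, ε • e i := Finset.sum_le_sum fun i _ =>
        ((he i).mul_mul_self_le_norm_smul hx).trans
          (smul_le_smul_of_nonneg_right (hε i) (he i).nonneg)
    _ = algebraMap ℝ A ε := by rw [← Finset.smul_sum, hsum, Algebra.algebraMap_eq_smul_one]

lemma IsSelfAdjoint.norm_mul_rankOne_self_mul {𝕜 E : Type*} [RCLike 𝕜] [NormedAddCommGroup E]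
    [InnerProductSpace 𝕜 E] [CompleteSpace E] {e : E →L[𝕜] E} (he : IsSelfAdjoint e) (x : E) :
    ‖e * rankOne 𝕜 x x * e‖ = ‖e x‖ ^ 2 := by
  rw [ContinuousLinearMap.mul_def, ContinuousLinearMap.mul_def, comp_rankOne, rankOne_comp,
    he.adjoint_eq, norm_rankOne, sq]

theorem expectation_rankOne_vanishes_general
    {H : Type*} [NormedAddCommGroup H] [InnerProductSpace ℂ H] [CompleteSpace H]
    (A : StarSubalgebra ℂ (H →L[ℂ] H))
    (hAcomm : ∀ a ∈ A, ∀ b ∈ A, a * b = b * a)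
    (E : (H →L[ℂ] H) →ₗ[ℂ] (H →L[ℂ] H))
    (hErange : ∀ x : H →L[ℂ] H, E x ∈ A)
    (hEproj : ∀ a ∈ A, E a = a)
    (hEpos : ∀ x : H →L[ℂ] H, 0 ≤ x → 0 ≤ E x)
    (hEbimod : ∀ a ∈ A, ∀ b ∈ A, ∀ x : H →L[ℂ] H, E (a * x * b) = a * E x * b)
    (ξ : H) (hξ : ‖ξ‖ = 1)
    (q : H →L[ℂ] H) (hq : ∀ η : H, q η = (inner ℂ ξ η : ℂ) • ξ)
    (hpart : ∀ ε : ℝ, 0 < ε → ∃ (n : ℕ) (e : Fin n → (H →L[ℂ] H)),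
      (∀ i, e i ∈ A) ∧ (∀ i, IsSelfAdjoint (e i)) ∧ (∀ i, IsIdempotentElem (e i)) ∧
      (∀ i j, i ≠ j → e i * e j = 0) ∧ (∑ i, e i = 1) ∧ (∀ i, ‖e i ξ‖ ^ 2 < ε)) :
    E q = 0 ∧ ((∀ x : H →L[ℂ] H, 0 ≤ x → E x = 0 → x = 0) → False) := by
  have hq_eq : q = rankOne ℂ ξ ξ := ContinuousLinearMap.ext hq
  have hq_proj : IsStarProjection q := hq_eq ▸ isStarProjection_rankOne_self hξ
  have hEq : E q = 0 := by
    refine CStarAlgebra.eq_zero_of_forall_le_algebraMap (hEpos q hq_proj.nonneg) fun ε hε => ?_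
    obtain ⟨n, e, heA, hesa, heid, horth, hsum, hnorm⟩ := hpart ε hε
    have hcomm (i : Fin n) : Commute (E q) (e i) := hAcomm _ (hErange q) _ (heA i)
    have hε_mem : algebraMap ℝ (H →L[ℂ] H) ε ∈ A := A.algebraMap_mem (ε : ℂ)
    calc E q = ∑ i, e i * E q * e i := (sum_mul_mul_eq_of_commute horth hsum hcomm).symm
      _ = E (∑ i, e i * q * e i) := by
        simp only [map_sum, hEbimod _ (heA _) _ (heA _)]
      _ ≤ E (algebraMap ℝ _ ε) := OrderHomClass.mono (PositiveLinearMap.mk₀ E hEpos) <|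
        sum_mul_mul_le_algebraMap (fun i => ⟨heid i, hesa i⟩) hsum hq_proj.isSelfAdjoint
          fun i => by rw [hq_eq, (hesa i).norm_mul_rankOne_self_mul]; exact (hnorm i).le
      _ = algebraMap ℝ _ ε := hEproj _ hε_mem
  refine ⟨hEq, fun hfaithful => ?_⟩
  have hξ0 : ξ ≠ 0 := norm_ne_zero_iff.mp (hξ ▸ one_ne_zero)
  exact rankOne_ne_zero hξ0 hξ0 (hq_eq ▸ hfaithful q hq_proj.nonneg hEq)

/-- Let `A ⊆ B(H)` be a commutative unital C*-subalgebra,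
`E : B(H) → A` a conditional expectation, `ξ` a unit vector and `q` the rank-one
projection onto `ℂξ`. If for every `ε > 0` there is a finite partition of unity
`e_1, …, e_n` in `A` by pairwise orthogonal projections with `‖e_k ξ‖² < ε` for all `k`,
then `E(q) = 0`; in particular `E` cannot be faithful. -/
theorem expectation_rankOne_vanishes
    {H : Type*} [NormedAddCommGroup H] [InnerProductSpace ℂ H] [CompleteSpace H]
    (A : StarSubalgebra ℂ (H →L[ℂ] H))
    (hAclosed : IsClosed (A : Set (H →L[ℂ] H)))
    (hAcomm : ∀ a ∈ A, ∀ b ∈ A, a * b = b * a)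
    (E : (H →L[ℂ] H) →ₗ[ℂ] (H →L[ℂ] H))
    (hErange : ∀ x : H →L[ℂ] H, E x ∈ A)
    (hEproj : ∀ a ∈ A, E a = a)
    (hEpos : ∀ x : H →L[ℂ] H, 0 ≤ x → 0 ≤ E x)
    (hEbimod : ∀ a ∈ A, ∀ b ∈ A, ∀ x : H →L[ℂ] H, E (a * x * b) = a * E x * b)
    (ξ : H) (hξ : ‖ξ‖ = 1)
    (q : H →L[ℂ] H) (hq : ∀ η : H, q η = (inner ℂ ξ η : ℂ) • ξ)
    (hpart : ∀ ε : ℝ, 0 < ε → ∃ (n : ℕ) (e : Fin n → (H →L[ℂ] H)),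
      (∀ i, e i ∈ A) ∧ (∀ i, IsSelfAdjoint (e i)) ∧ (∀ i, IsIdempotentElem (e i)) ∧
      (∀ i j, i ≠ j → e i * e j = 0) ∧ (∑ i, e i = 1) ∧ (∀ i, ‖e i ξ‖ ^ 2 < ε)) :
    E q = 0 ∧ ((∀ x : H →L[ℂ] H, 0 ≤ x → E x = 0 → x = 0) → False) :=
  expectation_rankOne_vanishes_general A hAcomm E hErange hEproj hEpos hEbimod ξ hξ q hq hpart
end
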